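/- Let ω_1,…,ω_N be nonnegative reals with Σ_k ω_k = 1, let ψ_k = Ω_k e^{iS_k/ħ} be pure states on ℝⁿ, and let M be an n×n real symmetric positive definite matrix. Define the kernel ρ(q,q') := Σ_k ω_k ψ_k(q) · conj(ψ_k(q')) and its amplitude Ω̄(q,q') := |ρ(q,q')|; assume Ω̄ is twice continuously differentiable in q in a neighborhood of the diagonal with Ω̄(q,q) > 0 for all q, and define the mixed-state mean value of the quantum potential ⟨Q̄⟩_ρ := −(ħ²/2) ∫_{ℝⁿ} [Σ_{i,j} M_{ij} ∂_{q_i}∂_{q_j} Ω̄(q,q')]|_{q'=q} dq. Then ⟨Q̄⟩_ρ ≥ Σ_k ω_k ⟨Q_k⟩, where ⟨Q_k⟩ := −(ħ²/2) ∫ Ω_k (Σ_{i,j} M_{ij} ∂_i∂_j Ω_k) dq is the mean value of the quantum potential of the pure state ψ_k. -/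

import Mathlib

open MeasureTheory Matrix

/-- Partial derivative `∂ⱼ f` of a real-valued function on `ℝⁿ`. -/
noncomputable def pd {n : ℕ} (j : Fin n) (f : (Fin n → ℝ) → ℝ) (q : Fin n → ℝ) : ℝ :=
  fderiv ℝ f q (Pi.single j 1)

/-- The pure state `ψ = Ω e^{iS/ħ}`. -/
noncomputable def pureState {n : ℕ} (hbar : ℝ) (Ω S : (Fin n → ℝ) → ℝ)
    (q : Fin n → ℝ) : ℂ :=
  (Ω q : ℂ) * Complex.exp (Complex.I * (S q : ℂ) / (hbar : ℂ))

/-- The kernel `ρ(q,q') = Σₖ ωₖ ψₖ(q) ψₖ(q')∗` of the mixed state. -/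
noncomputable def mixKer {n N : ℕ} (hbar : ℝ) (ω : Fin N → ℝ)
    (Ω S : Fin N → (Fin n → ℝ) → ℝ) (q q' : Fin n → ℝ) : ℂ :=
  ∑ k, (ω k : ℂ) * pureState hbar (Ω k) (S k) q *
    (starRingEnd ℂ) (pureState hbar (Ω k) (S k) q')

/-- The amplitude `Ω̄(q,q') = |ρ(q,q')|` of the mixed state kernel. -/
noncomputable def mixAmp {n N : ℕ} (hbar : ℝ) (ω : Fin N → ℝ)
    (Ω S : Fin N → (Fin n → ℝ) → ℝ) (q q' : Fin n → ℝ) : ℝ :=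
  ‖mixKer hbar ω Ω S q q'‖

/-- Second partial derivative `∂_{qᵢ}∂_{qⱼ} Ω̄(q,q')` in the first variable. -/
noncomputable def mixAmpD2 {n N : ℕ} (hbar : ℝ) (ω : Fin N → ℝ)
    (Ω S : Fin N → (Fin n → ℝ) → ℝ) (i j : Fin n) (q q' : Fin n → ℝ) : ℝ :=
  pd i (fun y => pd j (fun z => mixAmp hbar ω Ω S z q') y) q

/-- The mixed-state mean value of the quantum potential
`⟨Q̄⟩ρ = -(ħ²/2) ∫ [Σᵢⱼ Mᵢⱼ ∂_{qᵢ}∂_{qⱼ} Ω̄(q,q')]|_{q'=q} dq`. -/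
noncomputable def meanQmix {n N : ℕ} (hbar : ℝ) (M : Matrix (Fin n) (Fin n) ℝ)
    (ω : Fin N → ℝ) (Ω S : Fin N → (Fin n → ℝ) → ℝ) : ℝ :=
  -(hbar ^ 2 / 2) * ∫ q, ∑ i, ∑ j, M i j * mixAmpD2 hbar ω Ω S i j q q

/-- The pure-state mean value of the quantum potential
`⟨Q⟩ = -(ħ²/2) ∫ Ω Σᵢⱼ Mᵢⱼ ∂ᵢ∂ⱼΩ`. -/
noncomputable def meanQ {n : ℕ} (hbar : ℝ) (M : Matrix (Fin n) (Fin n) ℝ)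
    (Ω : (Fin n → ℝ) → ℝ) : ℝ :=
  -(hbar ^ 2 / 2) * ∫ q, Ω q * ∑ i, ∑ j, M i j * pd i (pd j Ω) q

/-! For fixed `q`, the triangle inequality gives `Ω̄(y, q) ≤ Σₖ ωₖ Ωₖ(q) Ωₖ(y)` for every `y`, with
equality at `y = q`. The difference therefore has a minimum at `q`, where its Hessian is positive
semidefinite; contracting with `M` yields, pointwise,
`Σᵢⱼ Mᵢⱼ ∂ᵢ∂ⱼ Ω̄(q, q) ≤ Σₖ ωₖ Ωₖ(q) Σᵢⱼ Mᵢⱼ ∂ᵢ∂ⱼ Ωₖ(q)`.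
Integrating and multiplying by `-ħ²/2 ≤ 0` reverses the inequality. -/

open Filter Topology

theorem IsLocalMin.deriv_deriv_nonneg {g : ℝ → ℝ} {x : ℝ} (h : IsLocalMin g x)
    (hc : ContinuousAt g x) : 0 ≤ deriv (deriv g) x := by
  by_contra! hneg
  -- The second-derivative test would make `x` also a local maximum, so `g` is locally constant.
  have hconst : g =ᶠ[𝓝 x] fun _ => g x :=
    (h.and (isLocalMax_of_deriv_deriv_neg hneg h.deriv_eq_zero hc)).mono
      fun y hy => le_antisymm hy.2 hy.1
  have hderiv : deriv g =ᶠ[𝓝 x] fun _ => 0 :=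
    hconst.eventuallyEq_nhds.mono fun y hy => by rw [hy.deriv_eq, deriv_const]
  rw [hderiv.deriv_eq, deriv_const] at hneg
  exact lt_irrefl 0 hneg

theorem IsLocalMin.fderiv_fderiv_apply_self_nonneg {E : Type*} [NormedAddCommGroup E]
    [NormedSpace ℝ E] {f : E → ℝ} {a : E} (h : IsLocalMin f a) (hf : ContDiffAt ℝ 2 f a)
    (v : E) : 0 ≤ fderiv ℝ (fderiv ℝ f) a v v := by
  set L : ℝ → E := fun t => a + t • v
  have hL : ∀ t, HasDerivAt L v t := fun t => by
    simpa only [one_smul] using ((hasDerivAt_id' t).smul_const v).const_add a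
  have hL0 : L 0 = a := by simp [L]
  have hLa : Tendsto L (𝓝 0) (𝓝 a) := hL0 ▸ (hL 0).continuousAt.tendsto
  have hderiv : deriv (f ∘ L) =ᶠ[𝓝 0] fun t => fderiv ℝ f (L t) v := by
    filter_upwards [hLa.eventually (hf.eventually (by simp))] with t ht
    exact ((ht.differentiableAt (by simp)).hasFDerivAt.comp_hasDerivAt t (hL t)).deriv
  have hderiv2 : HasDerivAt (fun t => fderiv ℝ f (L t) v) (fderiv ℝ (fderiv ℝ f) a v v) 0 := by
    have hD : HasFDerivAt (fderiv ℝ f) (fderiv ℝ (fderiv ℝ f) a) (L 0) := hL0 ▸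
      ((hf.fderiv_right (m := 1) (by norm_num)).differentiableAt one_ne_zero).hasFDerivAt
    exact (ContinuousLinearMap.apply ℝ ℝ v).hasFDerivAt.comp_hasDerivAt 0
      (hD.comp_hasDerivAt 0 (hL 0))
  have hmin : IsLocalMin (f ∘ L) 0 := (hL0 ▸ h).comp_continuous (hL 0).continuousAt
  have := hmin.deriv_deriv_nonneg (hf.continuousAt.comp_of_eq (hL 0).continuousAt hL0)
  rwa [hderiv.deriv_eq, hderiv2.deriv] at this

open scoped MatrixOrder in
theorem Matrix.PosSemidef.sum_mul_nonneg {ι : Type*} [Fintype ι] {M H : Matrix ι ι ℝ}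
    (hM : M.PosSemidef) (hH : ∀ v, 0 ≤ v ⬝ᵥ H *ᵥ v) : 0 ≤ ∑ i, ∑ j, M i j * H i j := by
  classical
  obtain ⟨R, rfl⟩ := CStarAlgebra.nonneg_iff_eq_star_mul_self.mp hM.nonneg
  calc 0 ≤ ∑ l, R l ⬝ᵥ H *ᵥ R l := Finset.sum_nonneg fun l _ => hH (R l)
    _ = _ := by
      simp only [dotProduct, mulVec, star_eq_conjTranspose, mul_apply, conjTranspose_apply,
        star_trivial, Finset.mul_sum, Finset.sum_mul]
      rw [Finset.sum_comm]
      refine Finset.sum_congr rfl fun i _ => ?_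
      rw [Finset.sum_comm]
      exact Finset.sum_congr rfl fun j _ => Finset.sum_congr rfl fun l _ => by ring

section MLaplacian

variable {n : ℕ} {M : Matrix (Fin n) (Fin n) ℝ} {f g : (Fin n → ℝ) → ℝ} {q : Fin n → ℝ}

noncomputable def mLaplacian (M : Matrix (Fin n) (Fin n) ℝ) (f : (Fin n → ℝ) → ℝ)
    (q : Fin n → ℝ) : ℝ :=
  ∑ i, ∑ j, M i j * pd i (pd j f) q

theorem pd_pd_eq_fderiv_fderiv (hf : ContDiffAt ℝ 2 f q) (i j : Fin n) :
    pd i (pd j f) q = fderiv ℝ (fderiv ℝ f) q (Pi.single i 1) (Pi.single j 1) := by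
  have hD : DifferentiableAt ℝ (fderiv ℝ f) q :=
    (hf.fderiv_right (m := 1) (by norm_num)).differentiableAt one_ne_zero
  rw [pd, show pd j f = fun y => fderiv ℝ f y (Pi.single j 1) from rfl,
    fderiv_clm_apply hD (differentiableAt_const _)]
  simp

theorem mLaplacian_eq_sum_iteratedFDeriv (hf : ContDiffAt ℝ 2 f q) :
    mLaplacian M f q =
      ∑ i, ∑ j, M i j * iteratedFDeriv ℝ 2 f q ![Pi.single i 1, Pi.single j 1] := by
  simp [mLaplacian, pd_pd_eq_fderiv_fderiv hf, iteratedFDeriv_two_apply]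

theorem ContDiffAt.mLaplacian_sub (hf : ContDiffAt ℝ 2 f q) (hg : ContDiffAt ℝ 2 g q) :
    mLaplacian M (f - g) q = mLaplacian M f q - mLaplacian M g q := by
  rw [mLaplacian_eq_sum_iteratedFDeriv (f := f - g) (hf.sub hg),
    mLaplacian_eq_sum_iteratedFDeriv hf, mLaplacian_eq_sum_iteratedFDeriv hg,
    iteratedFDeriv_sub_apply hf hg]
  simp only [_root_.sub_apply, mul_sub, Finset.sum_sub_distrib]

theorem mLaplacian_sum_const_mul {ι : Type*} [Fintype ι] {c : ι → ℝ}
    {F : ι → (Fin n → ℝ) → ℝ} (hF : ∀ k, ContDiffAt ℝ 2 (F k) q) :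
    mLaplacian M (fun y => ∑ k, c k * F k y) q = ∑ k, c k * mLaplacian M (F k) q := by
  have hcF : ∀ k ∈ Finset.univ, ContDiffAt ℝ 2 (fun y => c k * F k y) q :=
    fun k _ => contDiffAt_const.mul (hF k)
  rw [mLaplacian_eq_sum_iteratedFDeriv (ContDiffAt.sum hcF), iteratedFDeriv_fun_sum_apply hcF]
  simp only [← smul_eq_mul (a := c _), iteratedFDeriv_const_smul_apply' (hF _)]
  simp only [mLaplacian_eq_sum_iteratedFDeriv (hF _), _root_.sum_apply, _root_.smul_apply,
    smul_eq_mul, Finset.mul_sum]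
  symm
  rw [Finset.sum_comm]
  refine Finset.sum_congr rfl fun i _ => ?_
  rw [Finset.sum_comm]
  exact Finset.sum_congr rfl fun j _ => Finset.sum_congr rfl fun k _ => by ring

theorem IsLocalMin.mLaplacian_nonneg (h : IsLocalMin f q) (hf : ContDiffAt ℝ 2 f q)
    (hM : M.PosSemidef) : 0 ≤ mLaplacian M f q := by
  let B := (fderiv ℝ (fderiv ℝ f) q).toLinearMap₁₂
  have hB : mLaplacian M f q = ∑ i, ∑ j, M i j * LinearMap.toMatrix₂' ℝ B i j := by
    simp [mLaplacian, pd_pd_eq_fderiv_fderiv hf, LinearMap.toMatrix₂'_apply, B]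
  rw [hB]
  refine hM.sum_mul_nonneg fun v => ?_
  rw [← Matrix.toLinearMap₂'_apply', Matrix.toLinearMap₂'_toMatrix']
  exact h.fderiv_fderiv_apply_self_nonneg hf v

theorem mLaplacian_le_of_eventuallyLE (hM : M.PosSemidef) (hf : ContDiffAt ℝ 2 f q)
    (hg : ContDiffAt ℝ 2 g q) (hle : f ≤ᶠ[𝓝 q] g) (heq : f q = g q) :
    mLaplacian M f q ≤ mLaplacian M g q := by
  have hmin : IsLocalMin (g - f) q := hle.mono fun y hy => by simp [heq, hy]
  have := hmin.mLaplacian_nonneg (hg.sub hf) hM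
  rw [hg.mLaplacian_sub hf] at this
  linarith

end MLaplacian

section MixedState

variable {n N : ℕ} {hbar : ℝ} {ω : Fin N → ℝ} {Ω S : Fin N → (Fin n → ℝ) → ℝ}

theorem norm_pureState {Ω₀ S₀ : (Fin n → ℝ) → ℝ} {q : Fin n → ℝ} (h : 0 ≤ Ω₀ q) :
    ‖pureState hbar Ω₀ S₀ q‖ = Ω₀ q := by
  rw [pureState, norm_mul, Complex.norm_real, Complex.norm_exp, Real.norm_of_nonneg h]
  simp [Complex.div_re]

theorem mixAmp_le (hω : ∀ k, 0 ≤ ω k) (hΩ : ∀ k q, 0 ≤ Ω k q) (y q : Fin n → ℝ) :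
    mixAmp hbar ω Ω S y q ≤ ∑ k, ω k * Ω k q * Ω k y := by
  refine (norm_sum_le _ _).trans (Finset.sum_le_sum fun k _ => le_of_eq ?_)
  rw [norm_mul, norm_mul, Complex.norm_conj, Complex.norm_real, norm_pureState (hΩ k y),
    norm_pureState (hΩ k q), Real.norm_of_nonneg (hω k)]
  ring

theorem mixAmp_self (hω : ∀ k, 0 ≤ ω k) (hΩ : ∀ k q, 0 ≤ Ω k q) (q : Fin n → ℝ) :
    mixAmp hbar ω Ω S q q = ∑ k, ω k * Ω k q * Ω k q := by
  have hker : mixKer hbar ω Ω S q q = ((∑ k, ω k * Ω k q * Ω k q : ℝ) : ℂ) := by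
    push_cast
    refine Finset.sum_congr rfl fun k _ => ?_
    rw [mul_assoc, Complex.mul_conj, Complex.normSq_eq_norm_sq, norm_pureState (hΩ k q)]
    push_cast
    ring
  rw [mixAmp, hker, Complex.norm_real, Real.norm_of_nonneg]
  exact Finset.sum_nonneg fun k _ => mul_nonneg (mul_nonneg (hω k) (hΩ k q)) (hΩ k q)

theorem mLaplacian_mixAmp_le {M : Matrix (Fin n) (Fin n) ℝ} (hM : M.PosSemidef)
    (hω : ∀ k, 0 ≤ ω k) (hΩ : ∀ k q, 0 ≤ Ω k q) {q : Fin n → ℝ}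
    (hΩq : ∀ k, ContDiffAt ℝ 2 (Ω k) q) (hmix : ContDiffAt ℝ 2 (fun y => mixAmp hbar ω Ω S y q) q) :
    mLaplacian M (fun y => mixAmp hbar ω Ω S y q) q ≤
      ∑ k, ω k * (Ω k q * mLaplacian M (Ω k) q) := by
  calc mLaplacian M (fun y => mixAmp hbar ω Ω S y q) q
      ≤ mLaplacian M (fun y => ∑ k, ω k * Ω k q * Ω k y) q :=
        mLaplacian_le_of_eventuallyLE hM hmix
          (ContDiffAt.sum fun k _ => contDiffAt_const.mul (hΩq k))
          (Eventually.of_forall fun y => mixAmp_le hω hΩ y q) (mixAmp_self hω hΩ q)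
    _ = ∑ k, ω k * (Ω k q * mLaplacian M (Ω k) q) := by
        rw [mLaplacian_sum_const_mul hΩq]
        simp only [mul_assoc]

end MixedState

theorem meanQmix_ge_convex_sum_general {n N : ℕ}
    (hbar : ℝ)
    (M : Matrix (Fin n) (Fin n) ℝ) (hM : M.PosDef)
    (ω : Fin N → ℝ) (hω : ∀ k, 0 ≤ ω k)
    (Ω : Fin N → (Fin n → ℝ) → ℝ)
    (hΩc : ∀ k, ContDiff ℝ 2 (Ω k)) (hΩpos : ∀ k q, 0 < Ω k q)
    (S : Fin N → (Fin n → ℝ) → ℝ)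
    -- integrability of the pure-state data
    (hint3 : ∀ k i j, Integrable (fun q => Ω k q * pd i (pd j (Ω k)) q))
    -- `Ω̄` is twice continuously differentiable in `q` near the diagonal, positive there
    (hsmooth : ∃ U : Set ((Fin n → ℝ) × (Fin n → ℝ)), IsOpen U ∧ (∀ q, (q, q) ∈ U) ∧
      ∀ p ∈ U, ContDiffAt ℝ 2 (fun y => mixAmp hbar ω Ω S y p.2) p.1)
    -- integrability of the mixed-state integrand
    (hint5 : Integrable (fun q => ∑ i, ∑ j, M i j * mixAmpD2 hbar ω Ω S i j q q)) :
    meanQmix hbar M ω Ω S ≥ ∑ k, ω k * meanQ hbar M (Ω k) := by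
  obtain ⟨U, -, hdiag, hU⟩ := hsmooth
  have hΩ : ∀ k q, 0 ≤ Ω k q := fun k q => (hΩpos k q).le
  have hint : ∀ k, Integrable fun q => ω k * (Ω k q * mLaplacian M (Ω k) q) := fun k => by
    refine Integrable.const_mul ?_ (ω k)
    simp only [mLaplacian, Finset.mul_sum, mul_left_comm (Ω k _)]
    exact integrable_finsetSum _ fun i _ => integrable_finsetSum _ fun j _ =>
      (hint3 k i j).const_mul _
  have hpt : ∀ q, mLaplacian M (fun y => mixAmp hbar ω Ω S y q) q ≤
      ∑ k, ω k * (Ω k q * mLaplacian M (Ω k) q) :=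
    fun q => mLaplacian_mixAmp_le hM.posSemidef hω hΩ (fun k => (hΩc k).contDiffAt)
      (hU (q, q) (hdiag q))
  have hle := integral_mono hint5 (integrable_finsetSum _ fun k _ => hint k) hpt
  rw [integral_finsetSum _ fun k _ => hint k] at hle
  calc ∑ k, ω k * meanQ hbar M (Ω k)
      = -(hbar ^ 2 / 2) * ∑ k, ∫ q, ω k * (Ω k q * mLaplacian M (Ω k) q) := by
        rw [Finset.mul_sum]
        refine Finset.sum_congr rfl fun k _ => ?_
        simp only [meanQ, mLaplacian, integral_const_mul]
        ring
    _ ≤ meanQmix hbar M ω Ω S := mul_le_mul_of_nonpos_left hle (neg_nonpos.mpr (by positivity))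

/-- the mixed-state mean value of the quantum potential dominates the
convex combination of the pure-state ones: `⟨Q̄⟩ρ ≥ Σₖ ωₖ ⟨Qₖ⟩`. -/
theorem meanQmix_ge_convex_sum {n N : ℕ} (hn : 1 ≤ n) (hN : 1 ≤ N)
    (hbar : ℝ) (hhbar : 0 < hbar)
    (M : Matrix (Fin n) (Fin n) ℝ) (hM : M.PosDef)
    (ω : Fin N → ℝ) (hω : ∀ k, 0 ≤ ω k) (hωsum : ∑ k, ω k = 1)
    (Ω : Fin N → (Fin n → ℝ) → ℝ)
    (hΩc : ∀ k, ContDiff ℝ 2 (Ω k)) (hΩpos : ∀ k q, 0 < Ω k q)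
    (hΩnorm : ∀ k, ∫ q, (Ω k q) ^ 2 = 1)
    (S : Fin N → (Fin n → ℝ) → ℝ) (hSc : ∀ k, ContDiff ℝ 2 (S k))
    -- integrability of the pure-state data
    (hint1 : ∀ k j, Integrable (fun q => (Ω k q) ^ 2 * pd j (S k) q))
    (hint2 : ∀ k i j, Integrable (fun q => (Ω k q) ^ 2 * (pd i (S k) q * pd j (S k) q)))
    (hint3 : ∀ k i j, Integrable (fun q => Ω k q * pd i (pd j (Ω k)) q))
    (hint4 : ∀ k i j, Integrable (fun q => pd i (Ω k) q * pd j (Ω k) q))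
    -- `Ω̄` is twice continuously differentiable in `q` near the diagonal, positive there
    (hsmooth : ∃ U : Set ((Fin n → ℝ) × (Fin n → ℝ)), IsOpen U ∧ (∀ q, (q, q) ∈ U) ∧
      ∀ p ∈ U, ContDiffAt ℝ 2 (fun y => mixAmp hbar ω Ω S y p.2) p.1)
    (hpos : ∀ q, 0 < mixAmp hbar ω Ω S q q)
    -- integrability of the mixed-state integrand
    (hint5 : Integrable (fun q => ∑ i, ∑ j, M i j * mixAmpD2 hbar ω Ω S i j q q))
    -- all boundary terms in integration by parts vanish
    (hbd1 : ∀ k i j, ∫ q, pd i (fun x => Ω k x * pd j (Ω k) x) q = 0)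
    (hbd2 : ∀ k i, ∫ q, pd i (fun x => (Ω k x) ^ 2) q = 0) :
    meanQmix hbar M ω Ω S ≥ ∑ k, ω k * meanQ hbar M (Ω k) :=
  meanQmix_ge_convex_sum_general hbar M hM ω hω Ω hΩc hΩpos S hint3 hsmooth hint5
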